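/- Hall-type obstruction for popular matchings with lists of length 2: if preference lists are strict of length at most 2 and G' (the graph of f- and s-edges) has no A-perfect matching, then any inclusion-minimal set S of people with |N_{G'}(S)| < |S| consists entirely of people who are even in G1 and whose s-item equals their second-choice item (not the last-resort item), and every item in N_{G'}(S) is odd in G' with respect to any maximum matching of G'. -/

import Mathlib

universe u v

/-- A matching assigns to each person at most one item, injectively on items. -/
def IsMatching {α β : Type*} (M : α → Option β) : Prop :=
  ∀ a a' b, M a = some b → M a' = some b → a = a'

/-- A matching using only edges of the bipartite graph `E`. -/
def IsMatchingOn {α β : Type*} (E : α → β → Prop) (M : α → Option β) : Prop :=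
  (∀ a b, M a = some b → E a b) ∧ IsMatching M

/-- Number of matched people (= number of edges of the matching). -/
noncomputable def msize {α β : Type*} [Fintype α] (M : α → Option β) : ℕ :=
  Nat.card {a // (M a).isSome}

/-- A maximum cardinality matching of the bipartite graph `E`. -/
def IsMaxMatchingOn {α β : Type*} [Fintype α] (E : α → β → Prop) (M : α → Option β) : Prop :=
  IsMatchingOn E M ∧ ∀ M', IsMatchingOn E M' → msize M' ≤ msize M

mutual
  /-- A person reachable from an `M`-unmatched vertex by an even-length alternating path
  (such paths start at an unmatched person). -/
  inductive EvenA {α : Type u} {β : Type v} (E : α → β → Prop) (M : α → Option β) : α → Prop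
    | base (a : α) : M a = none → EvenA E M a
    | step (a : α) (b : β) : OddB E M b → M a = some b → EvenA E M a
  /-- An item reachable from an `M`-unmatched vertex by an odd-length alternating path. -/
  inductive OddB {α : Type u} {β : Type v} (E : α → β → Prop) (M : α → Option β) : β → Prop
    | step (a : α) (b : β) : EvenA E M a → E a b → M a ≠ some b → OddB E M b
end

mutual
  /-- An item reachable from an `M`-unmatched vertex by an even-length alternating path
  (such paths start at an unmatched item). -/
  inductive EvenB {α : Type u} {β : Type v} (E : α → β → Prop) (M : α → Option β) : β → Prop
    | base (b : β) : (∀ a, M a ≠ some b) → EvenB E M b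
    | step (a : α) (b : β) : OddA E M a → M a = some b → EvenB E M b
  /-- A person reachable from an `M`-unmatched vertex by an odd-length alternating path. -/
  inductive OddA {α : Type u} {β : Type v} (E : α → β → Prop) (M : α → Option β) : α → Prop
    | step (a : α) (b : β) : EvenB E M b → E a b → M a ≠ some b → OddA E M a
end

/-- An unreachable person: no alternating path from an unmatched vertex reaches it. -/
def UnreachA {α β : Type*} (E : α → β → Prop) (M : α → Option β) (a : α) : Prop :=
  ¬ EvenA E M a ∧ ¬ OddA E M a

/-- An unreachable item: no alternating path from an unmatched vertex reaches it. -/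
def UnreachB {α β : Type*} (E : α → β → Prop) (M : α → Option β) (b : β) : Prop :=
  ¬ EvenB E M b ∧ ¬ OddB E M b

attribute [local instance] Classical.propDecidable

/-- The rank-1 subgraph `G1` of an instance with strict lists of length at most 2:
each person `a` has top item `f a`. -/
def E1f {α β : Type*} (f : α → β) (a : α) (b : β) : Prop := b = f a

/-- The `s`-item of a person: her most preferred item even in `G1`, namely her second
choice `z a` if it is even in `G1`, and otherwise her last-resort item `last a`. -/
noncomputable def sItemOf {α β : Type*} (f : α → β) (z : α → Option β) (last : α → β)
    (M1 : α → Option β) (a : α) : β :=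
  match z a with
  | some c => if EvenB (E1f f) M1 c then c else last a
  | none => last a

/-- The edges of the reduced graph `G'`: each person to her top item, and each person
even in `G1` to her `s`-item. -/
def Ered {α β : Type*} (f : α → β) (z : α → Option β) (last : α → β)
    (M1 : α → Option β) (a : α) (b : β) : Prop :=
  b = f a ∨ (EvenA (E1f f) M1 a ∧ b = sItemOf f z last M1 a)

/-- The neighborhood in `G'` of a set `S` of people. -/
noncomputable def NbhdOf {α β : Type*} [Fintype β] (E : α → β → Prop) (S : Finset α) :
    Finset β :=
  Finset.univ.filter (fun b => ∃ a ∈ S, E a b)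

/-! A person `a` of `S` with a *private* neighbor `p` in `G'` (one adjacent to nobody else)
cannot lie in an inclusion-minimal deficient set: removing `a` removes `p` from the
neighborhood, so `S \ {a}` would be deficient too. A person who is odd or unreachable in `G1`
is matched to `f a`, which is then adjacent in `G'` only to `a`; a person whose `s`-item is
`last a` has that item as a private neighbor. For the second part, let `R` be the people of
`S` even with respect to a matching `M'` of `G'`. Their neighbors are odd, and `M'` maps
`S \ R` injectively into the non-odd part of `N(S)`; if `R ≠ S`, minimality gives
`|R| ≤ |N(R)|`, and adding up yields `|S| ≤ |N(S)|`. So every person of `S` is even, and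
every neighbor of an even person is odd. -/

section Matching

variable {α β : Type*} {E : α → β → Prop} {M : α → Option β}

theorem EvenA.oddB_of_adj {a : α} {b : β} (hA : EvenA E M a) (hE : E a b) :
    OddB E M b := by
  by_cases hab : M a = some b
  · cases hA with
    | base _ hnone => simp [hnone] at hab
    | step _ b' hodd hb' =>
      obtain rfl : b' = b := Option.some_injective _ (hb'.symm.trans hab)
      exact hodd
  · exact OddB.step a b hA hE hab

theorem exists_eq_some_of_not_evenA {a : α} (ha : ¬ EvenA E M a) : ∃ b, M a = some b :=
  Option.ne_none_iff_exists'.mp fun hnone => ha (EvenA.base a hnone)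

variable [Fintype β]

def IsDeficient (E : α → β → Prop) (S : Finset α) : Prop :=
  (NbhdOf E S).card < S.card

theorem mem_nbhdOf {S : Finset α} {b : β} : b ∈ NbhdOf E S ↔ ∃ a ∈ S, E a b := by
  simp [NbhdOf]

theorem IsDeficient.exists_ne_adj_of_minimal {S : Finset α} (hS : IsDeficient E S)
    (hmin : ∀ S' ⊂ S, ¬ IsDeficient E S') {a : α} (ha : a ∈ S) {p : β} (hp : E a p) :
    ∃ a' ≠ a, E a' p := by
  by_contra! hpriv
  have hpN : p ∈ NbhdOf E S := mem_nbhdOf.mpr ⟨a, ha, hp⟩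
  have hsub : NbhdOf E (S.erase a) ⊆ (NbhdOf E S).erase p := by
    intro b hb
    obtain ⟨a', ha', hE⟩ := mem_nbhdOf.mp hb
    refine Finset.mem_erase.mpr ⟨?_, mem_nbhdOf.mpr ⟨a', Finset.mem_of_mem_erase ha', hE⟩⟩
    rintro rfl
    exact hpriv a' (Finset.ne_of_mem_erase ha') hE
  have hcard := Finset.card_le_card hsub
  rw [Finset.card_erase_of_mem hpN] at hcard
  have hpos : 0 < (NbhdOf E S).card := Finset.card_pos.mpr ⟨p, hpN⟩
  refine hmin (S.erase a) (Finset.erase_ssubset ha) ?_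
  unfold IsDeficient at hS ⊢
  rw [Finset.card_erase_of_mem ha]
  omega

theorem nbhdOf_filter_evenA_subset (S : Finset α) :
    NbhdOf E (S.filter (EvenA E M)) ⊆ (NbhdOf E S).filter (OddB E M) := by
  intro b hb
  obtain ⟨a, ha, hE⟩ := mem_nbhdOf.mp hb
  obtain ⟨haS, hev⟩ := Finset.mem_filter.mp ha
  exact Finset.mem_filter.mpr ⟨mem_nbhdOf.mpr ⟨a, haS, hE⟩, hev.oddB_of_adj hE⟩

theorem card_filter_not_evenA_le (hM : IsMatchingOn E M) (S : Finset α) :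
    (S.filter fun a => ¬ EvenA E M a).card ≤
      ((NbhdOf E S).filter fun b => ¬ OddB E M b).card := by
  rw [← Finset.card_image_of_injective _ (Option.some_injective β)]
  refine Finset.card_le_card_of_injOn M (fun a ha => ?_) (fun a₁ ha₁ a₂ _ heq => ?_)
  · obtain ⟨haS, hev⟩ := Finset.mem_filter.mp ha
    obtain ⟨c, hc⟩ := exists_eq_some_of_not_evenA hev
    rw [hc]
    refine Finset.mem_image_of_mem _ (Finset.mem_filter.mpr ⟨?_, fun hodd => ?_⟩)
    · exact mem_nbhdOf.mpr ⟨a, haS, hM.1 a c hc⟩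
    · exact hev (EvenA.step a c hodd hc)
  · obtain ⟨c, hc⟩ := exists_eq_some_of_not_evenA (Finset.mem_filter.mp ha₁).2
    exact hM.2 a₁ a₂ c hc (heq ▸ hc)

theorem IsDeficient.evenA_of_minimal (hM : IsMatchingOn E M) {S : Finset α}
    (hS : IsDeficient E S) (hmin : ∀ S' ⊂ S, ¬ IsDeficient E S') {a : α} (ha : a ∈ S) :
    EvenA E M a := by
  by_contra hev
  have hRS : S.filter (EvenA E M) ⊂ S :=
    Finset.ssubset_iff_subset_ne.mpr
      ⟨Finset.filter_subset _ _, fun h => hev (Finset.mem_filter.mp (h ▸ ha)).2⟩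
  have hR := not_lt.mp (hmin _ hRS)
  have hNR := Finset.card_le_card (nbhdOf_filter_evenA_subset (E := E) (M := M) S)
  have hrest := card_filter_not_evenA_le hM S
  have hS' := Finset.card_filter_add_card_filter_not (s := S) (EvenA E M)
  have hN' := Finset.card_filter_add_card_filter_not (s := NbhdOf E S) (OddB E M)
  unfold IsDeficient at hS
  omega

theorem IsDeficient.oddB_of_mem_nbhdOf_of_minimal (hM : IsMatchingOn E M) {S : Finset α}
    (hS : IsDeficient E S) (hmin : ∀ S' ⊂ S, ¬ IsDeficient E S') {b : β}
    (hb : b ∈ NbhdOf E S) : OddB E M b := by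
  obtain ⟨a, ha, hE⟩ := mem_nbhdOf.mp hb
  exact (hS.evenA_of_minimal hM hmin ha).oddB_of_adj hE

end Matching

section ReducedGraph

variable {α β : Type*} {f : α → β} {z : α → Option β} {last : α → β} {M1 : α → Option β}

theorem sItemOf_cases (a : α) :
    (∃ c, z a = some c ∧ EvenB (E1f f) M1 c ∧ sItemOf f z last M1 a = c) ∨
      sItemOf f z last M1 a = last a := by
  unfold sItemOf
  cases hz : z a with
  | none => exact Or.inr rfl
  | some c =>
    by_cases hc : EvenB (E1f f) M1 c
    · exact Or.inl ⟨c, rfl, hc, if_pos hc⟩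
    · exact Or.inr (if_neg hc)

theorem eq_top_of_not_evenA (hM1 : IsMatchingOn (E1f f) M1) {a : α}
    (ha : ¬ EvenA (E1f f) M1 a) : M1 a = some (f a) := by
  obtain ⟨c, hc⟩ := exists_eq_some_of_not_evenA ha
  rw [hc, hM1.1 a c hc]

theorem not_evenB_top_of_not_evenA (hM1 : IsMatchingOn (E1f f) M1) {a : α}
    (ha : ¬ EvenA (E1f f) M1 a) : ¬ EvenB (E1f f) M1 (f a) := by
  have hma := eq_top_of_not_evenA hM1 ha
  rintro (⟨_, hfree⟩ | ⟨a', _, hodd, hma'⟩)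
  · exact hfree a hma
  · obtain rfl : a' = a := hM1.2 a' a (f a) hma' hma
    obtain ⟨_, _, _, hE, hne⟩ := hodd
    exact hne (hE ▸ hma)

theorem eq_of_ered_top_of_not_evenA
    (hpriv : ∀ a a', f a' ≠ last a ∧ z a' ≠ some (last a))
    (hM1 : IsMatchingOn (E1f f) M1) {a a' : α} (ha : ¬ EvenA (E1f f) M1 a)
    (h : Ered f z last M1 a' (f a)) : a' = a := by
  have hma := eq_top_of_not_evenA hM1 ha
  rcases h with htop | ⟨_, hs⟩
  · by_cases hev' : EvenA (E1f f) M1 a'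
    · exact absurd (EvenA.step a (f a) (hev'.oddB_of_adj htop) hma) ha
    · exact hM1.2 a' a (f a) (htop ▸ eq_top_of_not_evenA hM1 hev') hma
  · rcases sItemOf_cases (last := last) a' with ⟨c, _, hc, hsc⟩ | hl
    · rw [← hsc, ← hs] at hc
      exact absurd hc (not_evenB_top_of_not_evenA hM1 ha)
    · exact absurd (hs.trans hl) (hpriv a' a).1

theorem eq_of_ered_last (hlastinj : Function.Injective last)
    (hpriv : ∀ a a', f a' ≠ last a ∧ z a' ≠ some (last a)) {a a' : α}
    (h : Ered f z last M1 a' (last a)) : a' = a := by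
  rcases h with htop | ⟨_, hs⟩
  · exact absurd htop.symm (hpriv a a').1
  · rcases sItemOf_cases (M1 := M1) a' with ⟨c, hzc, _, hsc⟩ | hl
    · exact absurd (hzc.trans (congrArg some (hsc ▸ hs).symm)) (hpriv a a').2
    · exact hlastinj (hs.trans hl).symm

theorem exists_private_neighbor (hlastinj : Function.Injective last)
    (hpriv : ∀ a a', f a' ≠ last a ∧ z a' ≠ some (last a))
    (hM1 : IsMatchingOn (E1f f) M1) {a : α}
    (ha : ¬ (EvenA (E1f f) M1 a ∧ ∃ c, z a = some c ∧ sItemOf f z last M1 a = c)) :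
    ∃ p, Ered f z last M1 a p ∧ ∀ a', Ered f z last M1 a' p → a' = a := by
  by_cases hev : EvenA (E1f f) M1 a
  · have hs : sItemOf f z last M1 a = last a := by
      rcases sItemOf_cases a with ⟨c, hzc, _, hsc⟩ | hl
      · exact absurd ⟨hev, c, hzc, hsc⟩ ha
      · exact hl
    exact ⟨last a, Or.inr ⟨hev, hs.symm⟩, fun a' => eq_of_ered_last hlastinj hpriv⟩
  · exact ⟨f a, Or.inl rfl, fun a' => eq_of_ered_top_of_not_evenA hpriv hM1 hev⟩

end ReducedGraph

/-- Hall-type obstruction for strict lists of length at most 2: if `G'` has no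
`A`-perfect matching, then every inclusion-minimal deficient set `S` consists of people
even in `G1` whose `s`-item is their second choice (not their last resort), and every
item of `N_{G'}(S)` is odd in `G'` with respect to any maximum matching of `G'`. -/
theorem hall_obstruction_length_two {α β : Type*} [Fintype α] [Fintype β]
    (f : α → β) (z : α → Option β) (last : α → β)
    (hlastinj : Function.Injective last)
    (hpriv : ∀ a a', f a' ≠ last a ∧ z a' ≠ some (last a))
    (hne : ∀ a, f a ≠ last a ∧ z a ≠ some (f a) ∧ z a ≠ some (last a))
    (M1 : α → Option β) (hM1 : IsMaxMatchingOn (E1f f) M1)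
    (hnoAperfect : ¬ ∃ M, IsMatchingOn (Ered f z last M1) M ∧ ∀ a, (M a).isSome)
    (S : Finset α)
    (hS : (NbhdOf (Ered f z last M1) S).card < S.card)
    (hmin : ∀ S' ⊂ S, ¬ ((NbhdOf (Ered f z last M1) S').card < S'.card)) :
    (∀ a ∈ S, EvenA (E1f f) M1 a ∧
      ∃ c, z a = some c ∧ sItemOf f z last M1 a = c) ∧
    (∀ M', IsMaxMatchingOn (Ered f z last M1) M' →
      ∀ b ∈ NbhdOf (Ered f z last M1) S, OddB (Ered f z last M1) M' b) := by
  have hdef : IsDeficient (Ered f z last M1) S := hS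
  refine ⟨fun a ha => ?_, fun M' hM' b hb => hdef.oddB_of_mem_nbhdOf_of_minimal hM'.1 hmin hb⟩
  by_contra hbad
  obtain ⟨p, hap, hp⟩ := exists_private_neighbor hlastinj hpriv hM1.1 hbad
  obtain ⟨a', ha'a, ha'p⟩ := hdef.exists_ne_adj_of_minimal hmin ha hap
  exact ha'a (hp a' ha'p)
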